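/- Let κ be a positive definite kernel on a locally compact Hausdorff space X, A an (m,p)-condenser, g : X → (0,∞) continuous, and a = (a_i)_{i∈I} with a_i > 0. If K ranges over the increasing ordered family {K}_A of all compact (m,p)-condensers K ≺ A (i.e. K_i ⊂ A_i for all i ∈ I), then cap(A,a,g) = lim_{K↑A} cap(K,a,g). -/

import Mathlib

open MeasureTheory Filter Topology Set ENNReal NNReal

noncomputable section

namespace Zorii

variable {X : Type} [TopologicalSpace X] [MeasurableSpace X]

/-- A nonnegative Radon measure: inner regular and finite on compacts. -/
def IsRadon (μ : Measure X) : Prop :=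
  μ.InnerRegular ∧ IsFiniteMeasureOnCompacts μ

/-- `μ` is concentrated on `E`. -/
def ConcOn (μ : Measure X) (E : Set X) : Prop := μ Eᶜ = 0

/-- A kernel is a lower semicontinuous function on `X × X`. -/
def IsKernel (κ : X → X → ℝ≥0∞) : Prop :=
  LowerSemicontinuous (Function.uncurry κ)

/-- Mutual energy of two nonnegative measures. -/
def mutualE (κ : X → X → ℝ≥0∞) (μ ν : Measure X) : ℝ≥0∞ :=
  ∫⁻ x, ∫⁻ y, κ x y ∂ν ∂μ

/-- A signed Radon measure is represented by an ordered pair (positive part, negative part). -/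
def IsRadonPair (P : Measure X × Measure X) : Prop := IsRadon P.1 ∧ IsRadon P.2

/-- Finiteness of the energy of a signed measure, componentwise. -/
def FinEnergy (κ : X → X → ℝ≥0∞) (P : Measure X × Measure X) : Prop :=
  mutualE κ P.1 P.1 < ⊤ ∧ mutualE κ P.2 P.2 < ⊤ ∧
    mutualE κ P.1 P.2 < ⊤ ∧ mutualE κ P.2 P.1 < ⊤

/-- Membership in the pre-Hilbert space `E` of (signed) Radon measures of finite energy. -/
def inE (κ : X → X → ℝ≥0∞) (P : Measure X × Measure X) : Prop :=
  IsRadonPair P ∧ FinEnergy κ P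

/-- The energy scalar product of two signed measures of finite energy. -/
def eInner (κ : X → X → ℝ≥0∞) (P Q : Measure X × Measure X) : ℝ :=
  (mutualE κ P.1 Q.1 + mutualE κ P.2 Q.2).toReal -
    (mutualE κ P.1 Q.2 + mutualE κ P.2 Q.1).toReal

/-- The energy (squared seminorm) of a signed measure. -/
def normSq (κ : X → X → ℝ≥0∞) (P : Measure X × Measure X) : ℝ := eInner κ P P

/-- Difference of two signed measures (as pairs). -/
def pairSub (P Q : Measure X × Measure X) : Measure X × Measure X :=
  (P.1 + Q.2, P.2 + Q.1)

/-- `‖P - Q‖²`. -/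
def dist2 (κ : X → X → ℝ≥0∞) (P Q : Measure X × Measure X) : ℝ :=
  normSq κ (pairSub P Q)

/-- A positive definite kernel: symmetric, with nonnegative energies. -/
def PositiveDefinite (κ : X → X → ℝ≥0∞) : Prop :=
  (∀ x y, κ x y = κ y x) ∧
    ∀ P : Measure X × Measure X, IsRadonPair P → FinEnergy κ P → 0 ≤ normSq κ P

/-- A strictly positive definite kernel: the energy seminorm is a norm. -/
def StrictlyPositiveDefinite (κ : X → X → ℝ≥0∞) : Prop :=
  PositiveDefinite κ ∧ ∀ P, inE κ P → normSq κ P = 0 → P.1 = P.2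

/-- Potential of a nonnegative measure. -/
def potOf (κ : X → X → ℝ≥0∞) (ν : Measure X) (x : X) : ℝ≥0∞ := ∫⁻ y, κ x y ∂ν

/-- Potential of a signed measure, with values in the extended reals. -/
def pot (κ : X → X → ℝ≥0∞) (P : Measure X × Measure X) (x : X) : EReal :=
  (potOf κ P.1 x : EReal) - (potOf κ P.2 x : EReal)

/-- The interior capacity of a set `E ⊆ X`. -/
def setCap (κ : X → X → ℝ≥0∞) (E : Set X) : ℝ≥0∞ :=
  (⨅ (ν : Measure X) (_ : IsRadon ν ∧ ConcOn ν E ∧ ν Set.univ = 1), mutualE κ ν ν)⁻¹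

/-- `Q` holds nearly everywhere (n.e.) in `E`. -/
def NearlyEverywhereOn (κ : X → X → ℝ≥0∞) (Q : X → Prop) (E : Set X) : Prop :=
  setCap κ {x | x ∈ E ∧ ¬ Q x} = 0

/-- The "inf" of a function over `E`, understood nearly everywhere. -/
def nearInf (κ : X → X → ℝ≥0∞) (f : X → EReal) (E : Set X) : EReal :=
  sSup ((fun q : ℝ => (q : EReal)) ''
    {q : ℝ | NearlyEverywhereOn κ (fun x => (q : EReal) ≤ f x) E})

/-- The support of a measure. -/
def msupport (μ : Measure X) : Set X :=
  {x | ∀ U : Set X, IsOpen U → x ∈ U → μ U ≠ 0}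

/-- The vague topology on measures: the coarsest topology making
`ν ↦ ∫ f dν` continuous for all continuous compactly supported `f`. -/
def vagueTop (X : Type) [TopologicalSpace X] [MeasurableSpace X] :
    TopologicalSpace (Measure X) :=
  ⨅ (f : X → ℝ) (_ : Continuous f ∧ HasCompactSupport f),
    TopologicalSpace.induced (fun ν : Measure X => ∫ x, f x ∂ν) inferInstance

/-- The `A`-vague topology: coordinatewise vague topology. -/
def avagueTop (X : Type) [TopologicalSpace X] [MeasurableSpace X] (k : ℕ) :
    TopologicalSpace (Fin k → Measure X) :=
  @Pi.topologicalSpace (Fin k) (fun _ => Measure X) (fun _ => vagueTop X)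

/-- A net in `Y`: a map from a nonempty directed preordered index type. -/
structure Net (Y : Type) where
  ι : Type
  pre : Preorder ι
  ne : Nonempty ι
  dir : IsDirected ι (fun a b => pre.toLE.le a b)
  toFun : ι → Y

/-- The `atTop` filter of a net's index. -/
def Net.atTopF {Y : Type} (n : Net Y) : Filter n.ι := @Filter.atTop n.ι n.pre

/-- The order relation of a net's index. -/
def Net.leRel {Y : Type} (n : Net Y) (s t : n.ι) : Prop := @LE.le n.ι n.pre.toLE s t

/-- Sign of the index `i`: `+1` for the first `m` indices, `-1` otherwise. -/
def sgn (m : ℕ) {k : ℕ} (i : Fin k) : ℝ := if (i : ℕ) < m then 1 else -1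

/-- An `(m,p)`-condenser. -/
structure Condenser (X : Type) [TopologicalSpace X] (m p : ℕ) where
  plate : Fin (m + p) → Set X
  plate_nonempty : ∀ i, (plate i).Nonempty
  separated : ∀ i j : Fin (m + p), (i : ℕ) < m → ¬ ((j : ℕ) < m) →
    closure (plate i) ∩ closure (plate j) = ∅

variable {m p : ℕ}

/-- The closure of a condenser. -/
def Condenser.cl (A : Condenser X m p) : Condenser X m p where
  plate i := closure (A.plate i)
  plate_nonempty i := (A.plate_nonempty i).closure
  separated i j hi hj := by simpa [closure_closure] using A.separated i j hi hj

/-- `B ≺ A` : plates are contained one in another. -/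
def Condenser.prec (B A : Condenser X m p) : Prop := ∀ i, B.plate i ⊆ A.plate i

def Condenser.unionAll (A : Condenser X m p) : Set X := ⋃ i, A.plate i

def Condenser.posUnion (A : Condenser X m p) : Set X :=
  ⋃ i ∈ {i : Fin (m + p) | (i : ℕ) < m}, A.plate i

def Condenser.negUnion (A : Condenser X m p) : Set X :=
  ⋃ i ∈ {i : Fin (m + p) | ¬ (i : ℕ) < m}, A.plate i

/-- A measure associated with the condenser `A`: an `I`-tuple of nonnegative Radon
measures, the `i`-th one concentrated on the plate `A_i`. -/
def Assoc (A : Condenser X m p) (μ : Fin (m + p) → Measure X) : Prop :=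
  ∀ i, IsRadon (μ i) ∧ ConcOn (μ i) (A.plate i)

def Rpos (m p : ℕ) (μ : Fin (m + p) → Measure X) : Measure X :=
  ∑ i ∈ Finset.univ.filter (fun i : Fin (m + p) => (i : ℕ) < m), μ i

def Rneg (m p : ℕ) (μ : Fin (m + p) → Measure X) : Measure X :=
  ∑ i ∈ Finset.univ.filter (fun i : Fin (m + p) => ¬ (i : ℕ) < m), μ i

/-- The `R`-image of an associated measure (its positive and negative parts). -/
def Rpair (m p : ℕ) (μ : Fin (m + p) → Measure X) : Measure X × Measure X :=
  (Rpos m p μ, Rneg m p μ)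

/-- `E(A)`: associated measures of finite energy. -/
def inEA (κ : X → X → ℝ≥0∞) (A : Condenser X m p) (μ : Fin (m + p) → Measure X) : Prop :=
  Assoc A μ ∧ FinEnergy κ (Rpair m p μ)

def gInt (g : X → ℝ) (ν : Measure X) : ℝ≥0∞ := ∫⁻ x, ENNReal.ofReal (g x) ∂ν

/-- `E(A,b,g)` with prescribed `g`-masses `b i`. -/
def inEAb (κ : X → X → ℝ≥0∞) (A : Condenser X m p) (b : Fin (m + p) → ℝ≥0∞)
    (g : X → ℝ) (μ : Fin (m + p) → Measure X) : Prop :=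
  inEA κ A μ ∧ ∀ i, gInt g (μ i) = b i

/-- `E(A,≤b,g)`. -/
def inEAble (κ : X → X → ℝ≥0∞) (A : Condenser X m p) (b : Fin (m + p) → ℝ≥0∞)
    (g : X → ℝ) (μ : Fin (m + p) → Measure X) : Prop :=
  inEA κ A μ ∧ ∀ i, gInt g (μ i) ≤ b i

/-- `E⁰(A,b,g)`: members of `E(A,b,g)` whose coordinates are compactly supported
inside the respective plates. -/
def inE0b (κ : X → X → ℝ≥0∞) (A : Condenser X m p) (b : Fin (m + p) → ℝ≥0∞)
    (g : X → ℝ) (μ : Fin (m + p) → Measure X) : Prop :=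
  inEAb κ A b g μ ∧ ∀ i, ∃ K : Set X, IsCompact K ∧ K ⊆ A.plate i ∧ ConcOn (μ i) K

def assocNormSq (κ : X → X → ℝ≥0∞) (m p : ℕ) (μ : Fin (m + p) → Measure X) : ℝ :=
  normSq κ (Rpair m p μ)

def sdist2 (κ : X → X → ℝ≥0∞) (m p : ℕ) (μ ν : Fin (m + p) → Measure X) : ℝ :=
  dist2 κ (Rpair m p μ) (Rpair m p ν)

/-- The mutual energy `κ(μ^i, μ)` of the `i`-th coordinate with the whole measure. -/
def coordE (κ : X → X → ℝ≥0∞) (m p : ℕ) (μ : Fin (m + p) → Measure X) (i : Fin (m + p)) : ℝ :=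
  eInner κ (μ i, 0) (Rpair m p μ)

def aVec {k : ℕ} (a : Fin k → ℝ) : Fin k → ℝ≥0∞ := fun i => ENNReal.ofReal (a i)

/-- `‖E(A,b,g)‖²`. -/
def minE (κ : X → X → ℝ≥0∞) (A : Condenser X m p) (b : Fin (m + p) → ℝ≥0∞)
    (g : X → ℝ) : ℝ≥0∞ :=
  ⨅ (μ : Fin (m + p) → Measure X) (_ : inEAb κ A b g μ), ENNReal.ofReal (assocNormSq κ m p μ)

/-- `‖E⁰(A,b,g)‖²`. -/
def minE0 (κ : X → X → ℝ≥0∞) (A : Condenser X m p) (b : Fin (m + p) → ℝ≥0∞)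
    (g : X → ℝ) : ℝ≥0∞ :=
  ⨅ (μ : Fin (m + p) → Measure X) (_ : inE0b κ A b g μ), ENNReal.ofReal (assocNormSq κ m p μ)

/-- The interior capacity of the condenser `A`. -/
def cap (κ : X → X → ℝ≥0∞) (A : Condenser X m p) (a : Fin (m + p) → ℝ) (g : X → ℝ) : ℝ≥0∞ :=
  (minE κ A (aVec a) g)⁻¹

/-- The vector `a · cap(A,a,g)`. -/
def aCap (κ : X → X → ℝ≥0∞) (A : Condenser X m p) (a : Fin (m + p) → ℝ) (g : X → ℝ) :
    Fin (m + p) → ℝ≥0∞ :=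
  fun i => ENNReal.ofReal (a i) * cap κ A a g

def AVagueTendstoF {ι : Type} {k : ℕ} (F : Filter ι) (μs : ι → (Fin k → Measure X))
    (μ : Fin k → Measure X) : Prop :=
  @Filter.Tendsto ι (Fin k → Measure X) μs F (@nhds _ (avagueTop X k) μ)

def AVagueClusterPtF {ι : Type} {k : ℕ} (F : Filter ι) (μs : ι → (Fin k → Measure X))
    (μ : Fin k → Measure X) : Prop :=
  @MapClusterPt (Fin k → Measure X) (avagueTop X k) ι μ F μs

def StrongTendstoF (κ : X → X → ℝ≥0∞) (m p : ℕ) {ι : Type} (F : Filter ι)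
    (μs : ι → (Fin (m + p) → Measure X)) (χ : Fin (m + p) → Measure X) : Prop :=
  Tendsto (fun s => sdist2 κ m p (μs s) χ) F (nhds 0)

def StrongClusterPtF (κ : X → X → ℝ≥0∞) (m p : ℕ) {ι : Type} (F : Filter ι)
    (μs : ι → (Fin (m + p) → Measure X)) (χ : Fin (m + p) → Measure X) : Prop :=
  ∀ ε : ℝ, 0 < ε → ∃ᶠ s in F, sdist2 κ m p (μs s) χ < ε

/-- A minimizing net: a net in `E⁰(A,b,g)` whose energies tend to `‖E(A,b,g)‖²`
(the class `𝕄(A,b,g)`). -/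
def IsMinNet (κ : X → X → ℝ≥0∞) (A : Condenser X m p) (b : Fin (m + p) → ℝ≥0∞)
    (g : X → ℝ) (n : Net (Fin (m + p) → Measure X)) : Prop :=
  (∀ s, inE0b κ A b g (n.toFun s)) ∧
    Tendsto (fun s => ENNReal.ofReal (assocNormSq κ m p (n.toFun s))) n.atTopF
      (nhds (minE κ A b g))

/-- `M(A,b,g)`: `A`-vague cluster points (within `𝔐(Ā)`) of minimizing nets. -/
def Mset (κ : X → X → ℝ≥0∞) (A : Condenser X m p) (b : Fin (m + p) → ℝ≥0∞)
    (g : X → ℝ) : Set (Fin (m + p) → Measure X) :=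
  {χ | Assoc A.cl χ ∧ ∃ n : Net (Fin (m + p) → Measure X),
    IsMinNet κ A b g n ∧ AVagueClusterPtF n.atTopF n.toFun χ}

/-- `M'(A,b,g)`: strong cluster points (within `E(Ā)`) of minimizing nets. -/
def M'set (κ : X → X → ℝ≥0∞) (A : Condenser X m p) (b : Fin (m + p) → ℝ≥0∞)
    (g : X → ℝ) : Set (Fin (m + p) → Measure X) :=
  {χ | inEA κ A.cl χ ∧ ∃ n : Net (Fin (m + p) → Measure X),
    IsMinNet κ A b g n ∧ StrongClusterPtF κ m p n.atTopF n.toFun χ}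

/-- `M'_E(A,b,g)`: the equivalence class in `E` of `Rχ`, `χ ∈ M'(A,b,g)`. -/
def M'E (κ : X → X → ℝ≥0∞) (A : Condenser X m p) (b : Fin (m + p) → ℝ≥0∞)
    (g : X → ℝ) : Set (Measure X × Measure X) :=
  {P | inE κ P ∧ ∃ χ ∈ M'set κ A b g, dist2 κ P (Rpair m p χ) = 0}

/-- Fuglede's consistency property (C): every strong Cauchy net in `E⁺` converges
strongly to each of its vague cluster points. -/
def Consistent (κ : X → X → ℝ≥0∞) : Prop :=
  ∀ n : Net (Measure X),
    (∀ s, IsRadon (n.toFun s) ∧ mutualE κ (n.toFun s) (n.toFun s) < ⊤) →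
    (∀ ε : ℝ, 0 < ε → ∃ s₀, ∀ s, n.leRel s₀ s → ∀ t, n.leRel s₀ t →
      dist2 κ (n.toFun s, 0) (n.toFun t, 0) < ε) →
    ∀ ν₀ : Measure X, @MapClusterPt (Measure X) (vagueTop X) n.ι ν₀ n.atTopF n.toFun →
      Tendsto (fun s => dist2 κ (n.toFun s, 0) (ν₀, 0)) n.atTopF (nhds 0)

/-- A perfect kernel: consistent and strictly positive definite. -/
def PerfectKernel (κ : X → X → ℝ≥0∞) : Prop :=
  Consistent κ ∧ StrictlyPositiveDefinite κ

/-- The constants `c_i(ν)` in the definition of the class `Γ̂(A,a,g)`: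
`α_i a_i κ(x,ν) ≥ c_i g(x)` n.e. in `A_i` for all `i`, and `∑ c_i ≥ 1`. -/
def ConstFor (κ : X → X → ℝ≥0∞) (A : Condenser X m p) (a : Fin (m + p) → ℝ) (g : X → ℝ)
    (ν : Measure X × Measure X) (c : Fin (m + p) → ℝ) : Prop :=
  (∀ i, NearlyEverywhereOn κ
    (fun x => ((c i * g x : ℝ) : EReal) ≤ ((sgn m i * a i : ℝ) : EReal) * pot κ ν x)
    (A.plate i)) ∧
  1 ≤ ∑ i, c i

/-- Same as `ConstFor`, but with `∑ c_i = 1` (the class `Γ̂*`). -/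
def ConstForEq (κ : X → X → ℝ≥0∞) (A : Condenser X m p) (a : Fin (m + p) → ℝ) (g : X → ℝ)
    (ν : Measure X × Measure X) (c : Fin (m + p) → ℝ) : Prop :=
  (∀ i, NearlyEverywhereOn κ
    (fun x => ((c i * g x : ℝ) : EReal) ≤ ((sgn m i * a i : ℝ) : EReal) * pot κ ν x)
    (A.plate i)) ∧
  (∑ i, c i) = 1

/-- The class `Γ̂(A,a,g)`. -/
def Gammahat (κ : X → X → ℝ≥0∞) (A : Condenser X m p) (a : Fin (m + p) → ℝ)
    (g : X → ℝ) : Set (Measure X × Measure X) :=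
  {ν | inE κ ν ∧ ∃ c, ConstFor κ A a g ν c}

/-- The class `Γ̂*(A,a,g)`. -/
def GammahatStar (κ : X → X → ℝ≥0∞) (A : Condenser X m p) (a : Fin (m + p) → ℝ)
    (g : X → ℝ) : Set (Measure X × Measure X) :=
  {ν | inE κ ν ∧ ∃ c, ConstForEq κ A a g ν c}

/-- `‖Γ̂(A,a,g)‖²`. -/
def GammahatInf (κ : X → X → ℝ≥0∞) (A : Condenser X m p) (a : Fin (m + p) → ℝ)
    (g : X → ℝ) : ℝ≥0∞ :=
  ⨅ (ν : Measure X × Measure X) (_ : ν ∈ Gammahat κ A a g), ENNReal.ofReal (normSq κ ν)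

/-- `Ĝ(A,a,g)`: minimizers in the `Γ̂(A,a,g)`-problem. -/
def Ghat (κ : X → X → ℝ≥0∞) (A : Condenser X m p) (a : Fin (m + p) → ℝ)
    (g : X → ℝ) : Set (Measure X × Measure X) :=
  {ν | ν ∈ Gammahat κ A a g ∧ ∀ ν' ∈ Gammahat κ A a g, normSq κ ν ≤ normSq κ ν'}

/-- The class `Γ(A,a,g)` of associated measures. -/
def GammaSet (κ : X → X → ℝ≥0∞) (A : Condenser X m p) (a : Fin (m + p) → ℝ)
    (g : X → ℝ) : Set (Fin (m + p) → Measure X) :=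
  {μ | inEA κ A.cl μ ∧ ∃ c, ConstFor κ A a g (Rpair m p μ) c}

/-- `G(A,a,g)`: minimizers in the `Γ(A,a,g)`-problem. -/
def Gset (κ : X → X → ℝ≥0∞) (A : Condenser X m p) (a : Fin (m + p) → ℝ)
    (g : X → ℝ) : Set (Fin (m + p) → Measure X) :=
  {μ | μ ∈ GammaSet κ A a g ∧
    ∀ μ' ∈ GammaSet κ A a g, assocNormSq κ m p μ ≤ assocNormSq κ m p μ'}

/-- The interior capacitary constants of `A`. -/
def IsCapConst (κ : X → X → ℝ≥0∞) (A : Condenser X m p) (a : Fin (m + p) → ℝ)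
    (g : X → ℝ) (C : Fin (m + p) → ℝ) : Prop :=
  ∃ ω, ω ∈ Ghat κ A a g ∧ ConstFor κ A a g ω C

/-- The family of compact condensers `K ≺ A`. -/
def CompactSub (A : Condenser X m p) : Type :=
  {K : Condenser X m p // (∀ i, IsCompact (K.plate i)) ∧ ∀ i, K.plate i ⊆ A.plate i}

instance (A : Condenser X m p) : Preorder (CompactSub A) where
  le K L := ∀ i, K.1.plate i ⊆ L.1.plate i
  le_refl K i := subset_rfl
  le_trans K L M h h' i := (h i).trans (h' i)

/-- A minimizer of the energy over `E(A,b,g)` (the class `S(A,b,g)`). -/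
def IsMinimizer (κ : X → X → ℝ≥0∞) (A : Condenser X m p) (b : Fin (m + p) → ℝ≥0∞)
    (g : X → ℝ) (lam : Fin (m + p) → Measure X) : Prop :=
  inEAb κ A b g lam ∧ ∀ μ, inEAb κ A b g μ → assocNormSq κ m p lam ≤ assocNormSq κ m p μ

/-- The interior capacitary distributions `D(A,a,g)` associated with `A`:
simultaneous `A`-vague and strong limits of nets of minimizers
`λ_{K_s} ∈ S(K_s, a·cap(K_s,a,g), g)` along subnets `(K_s)` of the increasing family
of all compact condensers `K ≺ A`. -/
def Dset (κ : X → X → ℝ≥0∞) (A : Condenser X m p) (a : Fin (m + p) → ℝ)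
    (g : X → ℝ) : Set (Fin (m + p) → Measure X) :=
  {γ | inEA κ A.cl γ ∧
    ∃ (n : Net (CompactSub A)) (lam : n.ι → (Fin (m + p) → Measure X)),
      Tendsto n.toFun n.atTopF Filter.atTop ∧
      (∀ t, IsMinimizer κ (n.toFun t).1 (aCap κ (n.toFun t).1 a g) g (lam t)) ∧
      AVagueTendstoF n.atTopF lam γ ∧ StrongTendstoF κ m p n.atTopF lam γ}

/-- The standing assumptions of Section 4.6. -/
def StandingAssumptions (κ : X → X → ℝ≥0∞) (A : Condenser X m p)
    (a : Fin (m + p) → ℝ) (g : X → ℝ) : Prop :=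
  IsKernel κ ∧ PositiveDefinite κ ∧ Consistent κ ∧
  Continuous g ∧ (∀ x, 0 < g x) ∧ (∀ i, 0 < a i) ∧
  0 < cap κ A a g ∧
  (p = 0 ∨ ((∃ c : ℝ, 0 < c ∧ ∀ x ∈ A.unionAll, c ≤ g x) ∧
    ∃ M : ℝ≥0∞, M ≠ ⊤ ∧ ∀ x ∈ A.posUnion, ∀ y ∈ A.negUnion, κ x y ≤ M))

/-- The class of `ν ∈ E` with `α_i a_i κ(x,ν) ≥ C_i g(x)` n.e. in `A_i` for all `i`. -/
def PotIneqClass (κ : X → X → ℝ≥0∞) (A : Condenser X m p) (a : Fin (m + p) → ℝ)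
    (g : X → ℝ) (C : Fin (m + p) → ℝ) : Set (Measure X × Measure X) :=
  {ν | inE κ ν ∧ ∀ i, NearlyEverywhereOn κ
    (fun x => ((C i * g x : ℝ) : EReal) ≤ ((sgn m i * a i : ℝ) : EReal) * pot κ ν x)
    (A.plate i)}

/-- The class of `μ ∈ E(Ā)` with `α_i a_i κ(x,μ) ≥ C_i g(x)` n.e. in `A_i` for all `i`. -/
def PotIneqClassA (κ : X → X → ℝ≥0∞) (A : Condenser X m p) (a : Fin (m + p) → ℝ)
    (g : X → ℝ) (C : Fin (m + p) → ℝ) : Set (Fin (m + p) → Measure X) :=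
  {μ | inEA κ A.cl μ ∧ ∀ i, NearlyEverywhereOn κ
    (fun x => ((C i * g x : ℝ) : EReal) ≤ ((sgn m i * a i : ℝ) : EReal) * pot κ (Rpair m p μ) x)
    (A.plate i)}

/-- The quotient `α_i a_i κ(x,ν) / g(x)`, as an extended real. -/
def potQuot (κ : X → X → ℝ≥0∞) (m : ℕ) {k : ℕ} (a : Fin k → ℝ) (g : X → ℝ)
    (ν : Measure X × Measure X) (i : Fin k) (x : X) : EReal :=
  (((g x)⁻¹ : ℝ) : EReal) * (((sgn m i * a i : ℝ) : EReal) * pot κ ν x)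

end Zorii

/-!
Since `E(K,a,g) ⊆ E(L,a,g)` whenever `K ≺ L`, the capacity `cap(K,a,g)` increases with `K`
and converges to its supremum; it remains to see that `‖E(A,a,g)‖²` is not smaller than
`inf_K ‖E(K,a,g)‖²`. Given `μ ∈ E(A,a,g)` and `t > 0`, inner regularity yields compact
`K_i ⊆ A_i` such that `μ^i|K_i` carries all but a small part of the `g`-mass of `μ^i` and of the
mutual energy of `μ^i` with `μ`. Rescaling `μ^i|K_i` by a factor `c_i ∈ [1, 1 + t]` restores
the `g`-masses and gives an element of `E(K,a,g)` whose energy exceeds `‖μ‖²` by `O(t)`: the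
self-energies grow at most by `(1 + t)²`, and the cross energies lose only tails, which the
Cauchy–Schwarz inequality for the positive definite kernel controls. Splitting mutual energies
in their second argument needs measurable potentials; these are lower semicontinuous because
the kernel is and the measures are inner regular.
-/

section InnerRegular

variable {Y : Type*} [MeasurableSpace Y] {ν : Measure Y}

theorem sum_mul_measure_le_setLIntegral {ι : Type*} {s : Finset ι} {Q : ι → Set Y}
    (hd : (s : Set ι).PairwiseDisjoint Q) (hQ : ∀ i ∈ s, MeasurableSet (Q i)) {w : ι → ℝ≥0∞}
    {f : Y → ℝ≥0∞} (hf : ∀ i ∈ s, ∀ y ∈ Q i, w i ≤ f y) :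
    ∑ i ∈ s, w i * ν (Q i) ≤ ∫⁻ y in ⋃ i ∈ s, Q i, f y ∂ν := by
  rw [lintegral_biUnion_finset hd hQ]
  exact Finset.sum_le_sum fun i hi =>
    (setLIntegral_const _ _).symm.trans_le (setLIntegral_mono' (hQ i hi) (hf i hi))

theorem exists_smul_restrict_lintegral_eq {K : Set Y} {h : Y → ℝ≥0∞} {a C : ℝ≥0∞}
    (ha : ∫⁻ y, h y ∂ν = a) (ha' : a ≠ ⊤) (hK : a < C * ∫⁻ y in K, h y ∂ν) :
    ∃ c : ℝ≥0∞, 1 ≤ c ∧ c ≤ C ∧ ∫⁻ y, h y ∂(c • ν.restrict K) = a := by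
  have hGa : ∫⁻ y in K, h y ∂ν ≤ a := ha ▸ setLIntegral_le_lintegral _ _
  have hG0 : ∫⁻ y in K, h y ∂ν ≠ 0 := by
    intro hG
    rw [hG, mul_zero] at hK
    exact ENNReal.not_lt_zero hK
  have hGtop : ∫⁻ y in K, h y ∂ν ≠ ⊤ := ne_top_of_le_ne_top ha' hGa
  refine ⟨a / ∫⁻ y in K, h y ∂ν, ?_, ENNReal.div_le_of_le_mul hK.le, ?_⟩
  · rwa [ENNReal.le_div_iff_mul_le (.inl hG0) (.inl hGtop), one_mul]
  · rw [lintegral_smul_measure, smul_eq_mul, ENNReal.div_mul_cancel hG0 hGtop]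

variable [TopologicalSpace Y]

theorem innerRegular_restrict [ν.InnerRegular] {S : Set Y} (hS : MeasurableSet S) :
    (ν.restrict S).InnerRegular := by
  refine ⟨fun U hU r hr => ?_⟩
  rw [Measure.restrict_apply hU] at hr
  obtain ⟨K, hKU, hK, hrK⟩ := (hU.inter hS).exists_lt_isCompact hr
  refine ⟨K, hKU.trans inter_subset_left, hK, ?_⟩
  rwa [Measure.restrict_apply' hS, inter_eq_self_of_subset_left (hKU.trans inter_subset_right)]

theorem exists_isCompact_lt_sum_mul_measure [ν.InnerRegular] {ι : Type*} {s : Finset ι}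
    {B : ι → Set Y} (hB : ∀ i ∈ s, MeasurableSet (B i)) (w : ι → ℝ≥0∞) {c : ℝ≥0∞}
    (hc : c < ∑ i ∈ s, w i * ν (B i)) :
    ∃ Q : ι → Set Y, (∀ i ∈ s, Q i ⊆ B i ∧ IsCompact (Q i)) ∧ c < ∑ i ∈ s, w i * ν (Q i) := by
  classical
  let J := ∀ i, {K : Set Y // K ⊆ B i ∧ IsCompact K}
  have hsup : ∀ i ∈ s, w i * ν (B i) ≤ ⨆ j : J, w i * ν (j i).1 := by
    intro i hi
    simp only [(hB i hi).measure_eq_iSup_isCompact, ENNReal.mul_iSup, iSup_le_iff]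
    exact fun K hKB hK => le_iSup_of_le
      (Function.update (fun i => ⟨∅, empty_subset _, isCompact_empty⟩) i ⟨K, hKB, hK⟩) (by simp)
  have hdir : ∀ j j' : J, ∃ k : J, ∀ i, w i * ν (j i).1 ≤ w i * ν (k i).1 ∧
      w i * ν (j' i).1 ≤ w i * ν (k i).1 := fun j j' =>
    ⟨fun i => ⟨(j i).1 ∪ (j' i).1, union_subset (j i).2.1 (j' i).2.1, (j i).2.2.union (j' i).2.2⟩,
      fun i => ⟨by gcongr; exact subset_union_left, by gcongr; exact subset_union_right⟩⟩
  obtain ⟨j, hj⟩ := lt_iSup_iff.1 <|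
    hc.trans_le <| (Finset.sum_le_sum hsup).trans_eq (ENNReal.finsetSum_iSup hdir)
  exact ⟨fun i => (j i).1, fun i _ => (j i).2, hj⟩

theorem exists_step_lt_setLIntegral [ν.InnerRegular] {S : Set Y} (hS : MeasurableSet S)
    (f : Y → ℝ≥0∞) {c : ℝ≥0∞} (hc : c < ∫⁻ y in S, f y ∂ν) :
    ∃ (s : Finset ℝ≥0) (Q : ℝ≥0 → Set Y),
      (∀ r ∈ s, Q r ⊆ S ∧ IsCompact (Q r) ∧ ∀ y ∈ Q r, (r : ℝ≥0∞) ≤ f y) ∧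
      (s : Set ℝ≥0).PairwiseDisjoint Q ∧ c < ∑ r ∈ s, (r : ℝ≥0∞) * ν (Q r) := by
  rw [lintegral_eq_nnreal] at hc
  obtain ⟨φ, hc⟩ := lt_iSup_iff.1 hc
  obtain ⟨hφ, hc⟩ := lt_iSup_iff.1 hc
  rw [SimpleFunc.map_lintegral] at hc
  simp_rw [Measure.restrict_apply (φ.measurableSet_fiber _)] at hc
  obtain ⟨Q, hQ, hcQ⟩ := exists_isCompact_lt_sum_mul_measure
    (fun r _ => (φ.measurableSet_fiber r).inter hS) _ hc
  have hQφ : ∀ r ∈ φ.range, ∀ y ∈ Q r, φ y = r := fun r hr y hy => ((hQ r hr).1 hy).1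
  refine ⟨φ.range, Q, fun r hr => ⟨(hQ r hr).1.trans inter_subset_right, (hQ r hr).2,
    fun y hy => hQφ r hr y hy ▸ hφ y⟩, fun r hr r' hr' hne => ?_, hcQ⟩
  exact disjoint_left.2 fun y hy hy' => hne ((hQφ r hr y hy).symm.trans (hQφ r' hr' y hy'))

variable [T2Space Y] [OpensMeasurableSpace Y]

theorem exists_isCompact_lt_setLIntegral [ν.InnerRegular] {S : Set Y} (hS : ν Sᶜ = 0)
    (f : Y → ℝ≥0∞) {c : ℝ≥0∞} (hc : c < ∫⁻ y, f y ∂ν) :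
    ∃ K ⊆ S, IsCompact K ∧ c < ∫⁻ y in K, f y ∂ν := by
  obtain ⟨T, hST, hT, hT0⟩ := exists_measurable_superset_of_null hS
  rw [← lintegral_add_compl f hT, setLIntegral_measure_zero _ _ hT0, zero_add] at hc
  obtain ⟨s, Q, hQ, hd, hcQ⟩ := exists_step_lt_setLIntegral hT.compl f hc
  refine ⟨⋃ r ∈ s, Q r, iUnion₂_subset fun r hr => (hQ r hr).1.trans (compl_subset_comm.1 hST),
    s.isCompact_biUnion fun r hr => (hQ r hr).2.1, hcQ.trans_le ?_⟩
  exact sum_mul_measure_le_setLIntegral hd (fun r hr => (hQ r hr).2.1.measurableSet)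
    fun r hr => (hQ r hr).2.2

theorem exists_isCompact_setLIntegral_compl_le [ν.InnerRegular] {S : Set Y} (hS : ν Sᶜ = 0)
    {f : Y → ℝ≥0∞} (hf : ∫⁻ y, f y ∂ν ≠ ⊤) {δ : ℝ≥0∞} (hδ : δ ≠ 0) :
    ∃ K ⊆ S, IsCompact K ∧ ∫⁻ y in Kᶜ, f y ∂ν ≤ δ := by
  rcases le_or_gt (∫⁻ y, f y ∂ν) δ with hle | hlt
  · exact ⟨∅, empty_subset _, isCompact_empty, by rwa [compl_empty, Measure.restrict_univ]⟩
  obtain ⟨K, hKS, hK, hcK⟩ := exists_isCompact_lt_setLIntegral hS f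
    (ENNReal.sub_lt_self hf (pos_of_gt hlt).ne' hδ)
  refine ⟨K, hKS, hK, le_of_not_gt fun hδK => ?_⟩
  rw [ENNReal.sub_lt_iff_lt_right (hlt.trans hf.lt_top).ne hlt.le,
    ← lintegral_add_compl f hK.measurableSet] at hcK
  exact lt_irrefl _ (hcK.trans_le (by gcongr))

theorem exists_isCompact_truncation [ν.InnerRegular] {S : Set Y} (hS : ν Sᶜ = 0)
    (hne : S.Nonempty) {f h : Y → ℝ≥0∞} (hf : ∫⁻ y, f y ∂ν ≠ ⊤) {δ : ℝ≥0∞} (hδ : δ ≠ 0)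
    {c : ℝ≥0∞} (hc : c < ∫⁻ y, h y ∂ν) :
    ∃ K ⊆ S, IsCompact K ∧ K.Nonempty ∧ ∫⁻ y in Kᶜ, f y ∂ν ≤ δ ∧ c < ∫⁻ y in K, h y ∂ν := by
  obtain ⟨K₁, hK₁S, hK₁, hf₁⟩ := exists_isCompact_setLIntegral_compl_le hS hf hδ
  obtain ⟨K₂, hK₂S, hK₂, hc₂⟩ := exists_isCompact_lt_setLIntegral hS h hc
  obtain ⟨y, hy⟩ := hne
  refine ⟨K₁ ∪ K₂ ∪ {y}, union_subset (union_subset hK₁S hK₂S) (singleton_subset_iff.2 hy),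
    (hK₁.union hK₂).union isCompact_singleton, ⟨y, by simp⟩,
    (lintegral_mono_set ?_).trans hf₁, hc₂.trans_le (lintegral_mono_set ?_)⟩
  · exact compl_subset_compl.2 (subset_union_left.trans subset_union_left)
  · exact subset_union_right.trans subset_union_left

theorem lowerSemicontinuous_lintegral {X : Type*} [TopologicalSpace X] {f : X → Y → ℝ≥0∞}
    (hf : LowerSemicontinuous (Function.uncurry f)) (ν : Measure Y) [ν.InnerRegular] :
    LowerSemicontinuous fun x => ∫⁻ y, f x y ∂ν := by
  intro x₀ c hc
  obtain ⟨t, ht1, hct⟩ : ∃ t < 1, c < t * ∫⁻ y, f x₀ y ∂ν := by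
    by_contra! h
    exact (ENNReal.le_of_forall_lt_one_mul_le h).not_gt hc
  have ht0 : t ≠ 0 := by rintro rfl; simp at hct
  have htop : t ≠ ⊤ := (ht1.trans ENNReal.one_lt_top).ne
  obtain ⟨s, Q, hQ, hd, hcQ⟩ := exists_step_lt_setLIntegral (ν := ν) MeasurableSet.univ (f x₀)
    (c := c / t) <| by
      rwa [Measure.restrict_univ, ENNReal.div_lt_iff (.inl ht0) (.inl htop), mul_comm]
  -- scaling by `t < 1` makes `r ≤ f x₀` strict, so it persists near `x₀` uniformly on `Q r`
  have htube : ∀ᶠ x in 𝓝 x₀, ∀ r ∈ s, ∀ y ∈ Q r, t * r ≤ f x y := by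
    refine (eventually_all_finset s).2 fun r hr => ?_
    rcases eq_or_ne r 0 with rfl | hr0
    · simp
    refine (hQ r hr).2.1.eventually_forall_of_forall_eventually fun y hy => ?_
    have hlt : t * r < f x₀ y := by
      refine lt_of_lt_of_le ?_ ((hQ r hr).2.2 y hy)
      simpa using ENNReal.mul_lt_mul_left (a := (r : ℝ≥0∞)) (by simpa using hr0)
        ENNReal.coe_ne_top ht1
    exact (hf (x₀, y) _ hlt).mono fun z hz => hz.le
  filter_upwards [htube] with x hx
  calc c = t * (c / t) := (ENNReal.mul_div_cancel ht0 htop).symm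
    _ < t * ∑ r ∈ s, (r : ℝ≥0∞) * ν (Q r) := ENNReal.mul_lt_mul_right ht0 htop hcQ
    _ = ∑ r ∈ s, t * r * ν (Q r) := by rw [Finset.mul_sum]; simp_rw [mul_assoc]
    _ ≤ ∫⁻ y in ⋃ r ∈ s, Q r, f x y ∂ν :=
      sum_mul_measure_le_setLIntegral hd (fun r hr => (hQ r hr).2.1.measurableSet) hx
    _ ≤ ∫⁻ y, f x y ∂ν := setLIntegral_le_lintegral _ _

end InnerRegular

namespace Zorii

variable {X : Type} [MeasurableSpace X] {κ : X → X → ℝ≥0∞} {m p : ℕ}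

theorem mutualE_mono {μ μ' ν ν' : Measure X} (hμ : μ ≤ μ') (hν : ν ≤ ν') :
    mutualE κ μ ν ≤ mutualE κ μ' ν' :=
  lintegral_mono' hμ fun _ => lintegral_mono' hν le_rfl

theorem mutualE_add_left (μ₁ μ₂ ν : Measure X) :
    mutualE κ (μ₁ + μ₂) ν = mutualE κ μ₁ ν + mutualE κ μ₂ ν :=
  lintegral_add_measure _ _ _

theorem mutualE_add_right (μ ν₁ ν₂ : Measure X) (h : Measurable (potOf κ ν₁)) :
    mutualE κ μ (ν₁ + ν₂) = mutualE κ μ ν₁ + mutualE κ μ ν₂ := by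
  simp_rw [mutualE, lintegral_add_measure]
  exact lintegral_add_left h _

theorem mutualE_finsetSum_left {ι : Type*} (s : Finset ι) (μ : ι → Measure X) (ν : Measure X) :
    mutualE κ (∑ i ∈ s, μ i) ν = ∑ i ∈ s, mutualE κ (μ i) ν :=
  lintegral_finsetSum_measure _ _ _

theorem mutualE_smul_left (c : ℝ≥0∞) (μ ν : Measure X) :
    mutualE κ (c • μ) ν = c * mutualE κ μ ν :=
  lintegral_smul_measure _ _

theorem mutualE_smul_right {c : ℝ≥0∞} (hc : c ≠ ⊤) (μ ν : Measure X) :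
    mutualE κ μ (c • ν) = c * mutualE κ μ ν := by
  simp only [mutualE, lintegral_smul_measure, smul_eq_mul]
  exact lintegral_const_mul' _ _ hc

theorem mutualE_le_sq_mul_of_le_smul {μ ν μ' ν' : Measure X} {c : ℝ≥0∞} (hc : c ≠ ⊤)
    (hμ : μ ≤ c • μ') (hν : ν ≤ c • ν') : mutualE κ μ ν ≤ c ^ 2 * mutualE κ μ' ν' := by
  refine (mutualE_mono hμ hν).trans_eq ?_
  rw [mutualE_smul_left, mutualE_smul_right hc, ← mul_assoc, sq]

theorem FinEnergy.of_le_smul {P N P₁ N₁ : Measure X} (hfin : FinEnergy κ (P, N)) {C : ℝ≥0∞}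
    (hC : C ≠ ⊤) (hP₁ : P₁ ≤ C • P) (hN₁ : N₁ ≤ C • N) : FinEnergy κ (P₁, N₁) := by
  obtain ⟨hPP, hNN, hPN, hNP⟩ := hfin
  refine ⟨?_, ?_, ?_, ?_⟩ <;> refine (mutualE_le_sq_mul_of_le_smul hC ‹_› ‹_›).trans_lt ?_ <;>
    finiteness

theorem Rpos_add_Rneg (μ : Fin (m + p) → Measure X) : Rpos m p μ + Rneg m p μ = ∑ i, μ i :=
  Finset.sum_filter_add_sum_filter_not _ _ _

theorem Rpos_add (μ ν : Fin (m + p) → Measure X) :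
    Rpos m p (μ + ν) = Rpos m p μ + Rpos m p ν :=
  Finset.sum_add_distrib

theorem Rneg_add (μ ν : Fin (m + p) → Measure X) :
    Rneg m p (μ + ν) = Rneg m p μ + Rneg m p ν :=
  Finset.sum_add_distrib

theorem Rpos_mono {μ ν : Fin (m + p) → Measure X} (h : μ ≤ ν) : Rpos m p μ ≤ Rpos m p ν :=
  Finset.sum_le_sum fun i _ => h i

theorem Rneg_mono {μ ν : Fin (m + p) → Measure X} (h : μ ≤ ν) : Rneg m p μ ≤ Rneg m p ν :=
  Finset.sum_le_sum fun i _ => h i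

theorem Rpos_smul (c : ℝ≥0∞) (μ : Fin (m + p) → Measure X) :
    Rpos m p (c • μ) = c • Rpos m p μ := by
  simp only [Rpos, Pi.smul_apply, Finset.smul_sum]

theorem Rneg_smul (c : ℝ≥0∞) (μ : Fin (m + p) → Measure X) :
    Rneg m p (c • μ) = c • Rneg m p μ := by
  simp only [Rneg, Pi.smul_apply, Finset.smul_sum]

variable [TopologicalSpace X]

theorem isRadon_zero : IsRadon (0 : Measure X) := ⟨inferInstance, inferInstance⟩

theorem IsRadon.add {μ ν : Measure X} (hμ : IsRadon μ) (hν : IsRadon ν) : IsRadon (μ + ν) := by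
  obtain ⟨_, _⟩ := hμ
  obtain ⟨_, _⟩ := hν
  exact ⟨inferInstance, ⟨fun K hK => ENNReal.add_lt_top.2 ⟨hK.measure_lt_top, hK.measure_lt_top⟩⟩⟩

theorem IsRadon.smul {μ : Measure X} (hμ : IsRadon μ) {c : ℝ≥0∞} (hc : c ≠ ⊤) :
    IsRadon (c • μ) := by
  obtain ⟨_, _⟩ := hμ
  exact ⟨inferInstance, .smul μ hc⟩

theorem IsRadon.restrict {μ : Measure X} (hμ : IsRadon μ) {S : Set X} (hS : MeasurableSet S) :
    IsRadon (μ.restrict S) := by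
  obtain ⟨_, _⟩ := hμ
  exact ⟨innerRegular_restrict hS, inferInstance⟩

theorem isRadon_finsetSum {ι : Type*} {μ : ι → Measure X} (hμ : ∀ i, IsRadon (μ i))
    (s : Finset ι) : IsRadon (∑ i ∈ s, μ i) :=
  Finset.sum_induction _ IsRadon (fun _ _ => IsRadon.add) isRadon_zero fun i _ => hμ i

theorem isRadon_Rpos {μ : Fin (m + p) → Measure X} (hμ : ∀ i, IsRadon (μ i)) :
    IsRadon (Rpos m p μ) :=
  isRadon_finsetSum hμ _

theorem isRadon_Rneg {μ : Fin (m + p) → Measure X} (hμ : ∀ i, IsRadon (μ i)) :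
    IsRadon (Rneg m p μ) :=
  isRadon_finsetSum hμ _

theorem PositiveDefinite.cross_le (hpd : PositiveDefinite κ) {P : Measure X × Measure X}
    (hP : IsRadonPair P) (hfin : FinEnergy κ P) :
    mutualE κ P.1 P.2 + mutualE κ P.2 P.1 ≤ mutualE κ P.1 P.1 + mutualE κ P.2 P.2 := by
  have h := hpd.2 P hP hfin
  rwa [normSq, eInner, sub_nonneg, ENNReal.toReal_le_toReal
    (ENNReal.add_lt_top.2 ⟨hfin.2.2.1, hfin.2.2.2⟩).ne
    (ENNReal.add_lt_top.2 ⟨hfin.1, hfin.2.1⟩).ne] at h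

/-- A Cauchy–Schwarz bound, from the positivity of the energy of `(t • ρ, σ)`. -/
theorem PositiveDefinite.mutualE_le_mul_of_mutualE_self_le (hpd : PositiveDefinite κ)
    {ρ σ : Measure X} (hρ : IsRadon ρ) (hσ : IsRadon σ) (hρρ : mutualE κ ρ ρ ≠ ⊤)
    (hρσ : mutualE κ ρ σ ≠ ⊤) (hσρ : mutualE κ σ ρ ≠ ⊤) {t : ℝ≥0∞} (ht0 : t ≠ 0) (ht : t ≠ ⊤)
    (hσσ : mutualE κ σ σ ≤ t ^ 2) : mutualE κ ρ σ ≤ t * (mutualE κ ρ ρ + 1) := by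
  have hσσ' : mutualE κ σ σ ≠ ⊤ := ne_top_of_le_ne_top (by finiteness) hσσ
  have h := hpd.cross_le (P := (t • ρ, σ)) ⟨hρ.smul ht, hσ⟩ <| by
    refine ⟨?_, hσσ'.lt_top, ?_, ?_⟩ <;>
      simp only [mutualE_smul_left, mutualE_smul_right ht] <;> finiteness
  simp only [mutualE_smul_left, mutualE_smul_right ht] at h
  refine (ENNReal.mul_le_mul_iff_right ht0 ht).1 ?_
  calc t * mutualE κ ρ σ ≤ t * mutualE κ ρ σ + t * mutualE κ σ ρ := le_self_add
    _ ≤ t * (t * mutualE κ ρ ρ) + mutualE κ σ σ := h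
    _ ≤ t * (t * mutualE κ ρ ρ) + t ^ 2 := by gcongr
    _ = t * (t * (mutualE κ ρ ρ + 1)) := by ring

def Condenser.ofSubset (A : Condenser X m p) (K : Fin (m + p) → Set X)
    (hK : ∀ i, K i ⊆ A.plate i) (hne : ∀ i, (K i).Nonempty) : Condenser X m p where
  plate := K
  plate_nonempty := hne
  separated i j hi hj := subset_empty_iff.1 <| A.separated i j hi hj ▸
    inter_subset_inter (closure_mono (hK i)) (closure_mono (hK j))

theorem inEAb.of_prec {K L : Condenser X m p} (h : K.prec L) {b : Fin (m + p) → ℝ≥0∞}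
    {g : X → ℝ} {μ : Fin (m + p) → Measure X} (hμ : inEAb κ K b g μ) : inEAb κ L b g μ :=
  ⟨⟨fun i => ⟨(hμ.1.1 i).1, measure_mono_null (compl_subset_compl.2 (h i)) (hμ.1.1 i).2⟩,
    hμ.1.2⟩, hμ.2⟩

theorem minE_le_of_prec {K L : Condenser X m p} (h : K.prec L) (b : Fin (m + p) → ℝ≥0∞)
    (g : X → ℝ) : minE κ L b g ≤ minE κ K b g :=
  le_iInf₂ fun μ hμ => iInf₂_le μ (hμ.of_prec h)

variable [T2Space X] [OpensMeasurableSpace X]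

theorem measurable_potOf (hκ : IsKernel κ) {ν : Measure X} (hν : ν.InnerRegular) :
    Measurable (potOf κ ν) :=
  (lowerSemicontinuous_lintegral hκ ν).measurable

theorem mutualE_cross_le_of_truncation (hκ : IsKernel κ) (hpd : PositiveDefinite κ)
    {P N P' Q' N' R' P₁ N₁ : Measure X} (hP : P = P' + Q') (hN : N = N' + R')
    (hPr : IsRadon P) (hR' : IsRadon R') (hN' : N'.InnerRegular)
    (hPP : mutualE κ P P ≠ ⊤) (hPN : mutualE κ P N ≠ ⊤) (hNP : mutualE κ N P ≠ ⊤)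
    (hP₁ : P' ≤ P₁) (hN₁ : N' ≤ N₁) {t : ℝ≥0∞} (ht0 : t ≠ 0) (ht : t ≠ ⊤)
    (hR'R' : mutualE κ R' R' ≤ t ^ 2) (hQ'N : mutualE κ Q' N ≤ t ^ 2) :
    mutualE κ P N ≤ mutualE κ P₁ N₁ + t * (mutualE κ P P + 1) + t ^ 2 := by
  have hP'P : P' ≤ P := hP ▸ Measure.le_add_right le_rfl
  have hR'N : R' ≤ N := hN ▸ Measure.le_add_left le_rfl
  have hsplit : mutualE κ P N = mutualE κ P' N' + mutualE κ P' R' + mutualE κ Q' N := by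
    rw [hP, mutualE_add_left, hN, mutualE_add_right _ _ _ (measurable_potOf hκ hN')]
  have hcs : mutualE κ P R' ≤ t * (mutualE κ P P + 1) :=
    hpd.mutualE_le_mul_of_mutualE_self_le hPr hR' hPP
      (ne_top_of_le_ne_top hPN (mutualE_mono le_rfl hR'N))
      (ne_top_of_le_ne_top hNP (mutualE_mono hR'N le_rfl)) ht0 ht hR'R'
  rw [hsplit]
  gcongr
  · exact mutualE_mono hP₁ hN₁
  · exact (mutualE_mono hP'P le_rfl).trans hcs

theorem normSq_le_of_truncation (hκ : IsKernel κ) (hpd : PositiveDefinite κ)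
    {P N P' Q' N' R' P₁ N₁ : Measure X} (hP : P = P' + Q') (hN : N = N' + R')
    (hP' : IsRadon P') (hQ' : IsRadon Q') (hN' : IsRadon N') (hR' : IsRadon R')
    (hfin : FinEnergy κ (P, N)) {t : ℝ≥0} (ht : 0 < t)
    (hP₁ : P' ≤ P₁) (hP₁' : P₁ ≤ (1 + t : ℝ≥0∞) • P)
    (hN₁ : N' ≤ N₁) (hN₁' : N₁ ≤ (1 + t : ℝ≥0∞) • N)
    (htail : mutualE κ (Q' + R') (P + N) ≤ (t : ℝ≥0∞) ^ 2) :
    normSq κ (P₁, N₁) ≤ normSq κ (P, N) +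
      t * ((3 + t) * (mutualE κ P P + mutualE κ N N).toReal + 2 * (1 + t)) := by
  have hC : (1 + t : ℝ≥0∞) ≠ ⊤ := by finiteness
  have ht0 : (t : ℝ≥0∞) ≠ 0 := by exact_mod_cast ht.ne'
  obtain ⟨hPP, hNN, hPN, hNP⟩ := hfin
  obtain ⟨hPP₁, hNN₁, hPN₁, hNP₁⟩ := FinEnergy.of_le_smul ⟨hPP, hNN, hPN, hNP⟩ hC hP₁' hN₁'
  have hQ'R' : Q' ≤ Q' + R' := Measure.le_add_right le_rfl
  have hR'Q' : R' ≤ Q' + R' := Measure.le_add_left le_rfl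
  have hPPN : P ≤ P + N := Measure.le_add_right le_rfl
  have hNPN : N ≤ P + N := Measure.le_add_left le_rfl
  have hQ'P : Q' ≤ P := hP ▸ Measure.le_add_left le_rfl
  have hR'N : R' ≤ N := hN ▸ Measure.le_add_left le_rfl
  have hcross₁ := mutualE_cross_le_of_truncation hκ hpd hP hN (hP ▸ hP'.add hQ') hR' hN'.1
    hPP.ne hPN.ne hNP.ne hP₁ hN₁ ht0 ENNReal.coe_ne_top
    ((mutualE_mono hR'Q' (hR'N.trans hNPN)).trans htail) ((mutualE_mono hQ'R' hNPN).trans htail)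
  have hcross₂ := mutualE_cross_le_of_truncation hκ hpd hN hP (hN ▸ hN'.add hR') hQ' hP'.1
    hNN.ne hNP.ne hPN.ne hN₁ hP₁ ht0 ENNReal.coe_ne_top
    ((mutualE_mono hQ'R' (hQ'P.trans hPPN)).trans htail) ((mutualE_mono hR'Q' hPPN).trans htail)
  have hself₁ := mutualE_le_sq_mul_of_le_smul (κ := κ) hC hP₁' hP₁'
  have hself₂ := mutualE_le_sq_mul_of_le_smul (κ := κ) hC hN₁' hN₁'
  simp only [normSq, eInner]
  lift mutualE κ P P to ℝ≥0 using hPP.ne with a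
  lift mutualE κ N N to ℝ≥0 using hNN.ne with b
  lift mutualE κ P N to ℝ≥0 using hPN.ne with c
  lift mutualE κ N P to ℝ≥0 using hNP.ne with d
  lift mutualE κ P₁ P₁ to ℝ≥0 using hPP₁.ne with a₁
  lift mutualE κ N₁ N₁ to ℝ≥0 using hNN₁.ne with b₁
  lift mutualE κ P₁ N₁ to ℝ≥0 using hPN₁.ne with c₁
  lift mutualE κ N₁ P₁ to ℝ≥0 using hNP₁.ne with d₁
  norm_cast at hcross₁ hcross₂ hself₁ hself₂
  rw [← NNReal.coe_le_coe] at hcross₁ hcross₂ hself₁ hself₂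
  simp only [← ENNReal.coe_add, ENNReal.coe_toReal]
  push_cast at hcross₁ hcross₂ hself₁ hself₂ ⊢
  linarith

theorem mutualE_sum_self_ne_top (hκ : IsKernel κ) {μ : Fin (m + p) → Measure X}
    (hμ : ∀ i, IsRadon (μ i)) (hfin : FinEnergy κ (Rpair m p μ)) :
    mutualE κ (∑ i, μ i) (∑ i, μ i) ≠ ⊤ := by
  obtain ⟨hPP, hNN, hPN, hNP⟩ := hfin
  have hmeas := measurable_potOf hκ (isRadon_Rpos hμ).1
  rw [← Rpos_add_Rneg, mutualE_add_left, mutualE_add_right _ _ _ hmeas,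
    mutualE_add_right _ _ _ hmeas]
  exact ENNReal.add_ne_top.2 ⟨ENNReal.add_ne_top.2 ⟨hPP.ne, hPN.ne⟩,
    ENNReal.add_ne_top.2 ⟨hNP.ne, hNN.ne⟩⟩

theorem exists_compact_plates (hκ : IsKernel κ) {A : Condenser X m p} {a : Fin (m + p) → ℝ}
    (ha : ∀ i, 0 < a i) {g : X → ℝ} {μ : Fin (m + p) → Measure X}
    (hμ : inEAb κ A (aVec a) g μ) {t : ℝ≥0} (ht : 0 < t) :
    ∃ K : Fin (m + p) → Set X, (∀ i, K i ⊆ A.plate i) ∧ (∀ i, IsCompact (K i)) ∧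
      (∀ i, (K i).Nonempty) ∧
      mutualE κ (∑ i, (μ i).restrict (K i)ᶜ) (∑ i, μ i) ≤ (t : ℝ≥0∞) ^ 2 ∧
      ∀ i, aVec a i < (1 + t) * ∫⁻ x in K i, ENNReal.ofReal (g x) ∂μ i := by
  obtain ⟨⟨hassoc, hfin⟩, hmass⟩ := hμ
  have hrad i : IsRadon (μ i) := (hassoc i).1
  have ht0 : (t : ℝ≥0∞) ≠ 0 := by exact_mod_cast ht.ne'
  have hδ : (t : ℝ≥0∞) ^ 2 / (m + p : ℕ) ≠ 0 := by simp [ENNReal.div_eq_zero_iff, ht0]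
  have htail_fin i : ∫⁻ x, potOf κ (∑ j, μ j) x ∂μ i ≠ ⊤ :=
    ne_top_of_le_ne_top (mutualE_sum_self_ne_top hκ hrad hfin) <| lintegral_mono'
      (Finset.single_le_sum (fun j _ => Measure.zero_le (μ j)) (Finset.mem_univ i)) le_rfl
  have hmass_lt i : aVec a i / (1 + t) < ∫⁻ x, ENNReal.ofReal (g x) ∂μ i := by
    change _ < gInt g (μ i)
    rw [hmass i]
    refine ENNReal.div_lt_of_lt_mul ?_
    calc aVec a i = aVec a i * 1 := (mul_one _).symm
      _ < aVec a i * (1 + t) := ENNReal.mul_lt_mul_right (by simpa [aVec] using ha i)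
          ENNReal.ofReal_ne_top (ENNReal.lt_add_right ENNReal.one_ne_top ht0)
  choose K hKA hK hKne htail hmassK using fun i =>
    haveI := (hrad i).1
    exists_isCompact_truncation (hassoc i).2 (A.plate_nonempty i) (htail_fin i) hδ (hmass_lt i)
  refine ⟨K, hKA, hK, hKne, ?_, fun i => ?_⟩
  · rw [mutualE_finsetSum_left]
    calc ∑ i, mutualE κ ((μ i).restrict (K i)ᶜ) (∑ j, μ j)
        ≤ ∑ _i : Fin (m + p), (t : ℝ≥0∞) ^ 2 / (m + p : ℕ) := Finset.sum_le_sum fun i _ => htail i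
      _ ≤ (t : ℝ≥0∞) ^ 2 := by simpa using ENNReal.mul_div_le
  · rw [mul_comm, ← ENNReal.div_lt_iff (.inl (by simp)) (.inl (by finiteness))]
    exact hmassK i

theorem exists_compactSub_minE_le (hκ : IsKernel κ) (hpd : PositiveDefinite κ)
    {A : Condenser X m p} {a : Fin (m + p) → ℝ} (ha : ∀ i, 0 < a i) {g : X → ℝ}
    {μ : Fin (m + p) → Measure X} (hμ : inEAb κ A (aVec a) g μ) {t : ℝ≥0} (ht : 0 < t) :
    ∃ K : CompactSub A, minE κ K.1 (aVec a) g ≤ ENNReal.ofReal (assocNormSq κ m p μ +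
      t * ((3 + t) * (mutualE κ (Rpos m p μ) (Rpos m p μ) +
        mutualE κ (Rneg m p μ) (Rneg m p μ)).toReal + 2 * (1 + t))) := by
  obtain ⟨K, hKA, hK, hKne, htails, hmassK⟩ := exists_compact_plates hκ ha hμ ht
  obtain ⟨⟨hassoc, hfin⟩, hmass⟩ := hμ
  have hrad i : IsRadon (μ i) := (hassoc i).1
  have hC : (1 + t : ℝ≥0∞) ≠ ⊤ := by finiteness
  choose c hc1 hcC hcg using fun i =>
    exists_smul_restrict_lintegral_eq (hmass i) ENNReal.ofReal_ne_top (hmassK i)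
  set μK : Fin (m + p) → Measure X := fun i => (μ i).restrict (K i)
  set μKc : Fin (m + p) → Measure X := fun i => (μ i).restrict (K i)ᶜ
  set ν : Fin (m + p) → Measure X := fun i => c i • μK i
  have hsplit : μ = μK + μKc :=
    funext fun i => (Measure.restrict_add_restrict_compl (hK i).measurableSet).symm
  have hμKν : μK ≤ ν := fun i => by
    simpa using (IsOrderedSMul.smul_le_smul (hc1 i) (le_refl (μK i)) : (1 : ℝ≥0∞) • μK i ≤ _)
  have hνμ : ν ≤ (1 + t : ℝ≥0∞) • μ := fun i =>
    IsOrderedSMul.smul_le_smul (hcC i) Measure.restrict_le_self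
  have hνPos := (Rpos_mono hνμ).trans_eq (Rpos_smul _ _)
  have hνNeg := (Rneg_mono hνμ).trans_eq (Rneg_smul _ _)
  have hνmem : inEAb κ (A.ofSubset K hKA hKne) (aVec a) g ν := by
    refine ⟨⟨fun i => ⟨((hrad i).restrict (hK i).measurableSet).smul
      (ne_top_of_le_ne_top hC (hcC i)), ?_⟩, hfin.of_le_smul hC hνPos hνNeg⟩, hcg⟩
    simp [ConcOn, Condenser.ofSubset, ν, μK, Measure.restrict_apply' (hK i).measurableSet]
  refine ⟨⟨A.ofSubset K hKA hKne, hK, hKA⟩, (iInf₂_le ν hνmem).trans (ENNReal.ofReal_le_ofReal ?_)⟩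
  have hμKrad i : IsRadon (μK i) := (hrad i).restrict (hK i).measurableSet
  have hμKcrad i : IsRadon (μKc i) := (hrad i).restrict (hK i).measurableSet.compl
  exact normSq_le_of_truncation hκ hpd (hsplit ▸ Rpos_add μK μKc) (hsplit ▸ Rneg_add μK μKc)
    (isRadon_Rpos hμKrad) (isRadon_Rpos hμKcrad) (isRadon_Rneg hμKrad) (isRadon_Rneg hμKcrad)
    hfin ht (Rpos_mono hμKν) hνPos (Rneg_mono hμKν) hνNeg
    (by rwa [Rpos_add_Rneg, Rpos_add_Rneg])

theorem iInf_minE_compactSub_le (hκ : IsKernel κ) (hpd : PositiveDefinite κ)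
    (A : Condenser X m p) {a : Fin (m + p) → ℝ} (ha : ∀ i, 0 < a i) (g : X → ℝ) :
    ⨅ K : CompactSub A, minE κ K.1 (aVec a) g ≤ minE κ A (aVec a) g := by
  refine le_iInf₂ fun μ hμ => ?_
  set S := (mutualE κ (Rpos m p μ) (Rpos m p μ) + mutualE κ (Rneg m p μ) (Rneg m p μ)).toReal
  have hlim : Tendsto (fun t : ℝ≥0 => ENNReal.ofReal (assocNormSq κ m p μ +
      t * ((3 + t) * S + 2 * (1 + t)))) (𝓝[>] 0) (𝓝 (ENNReal.ofReal (assocNormSq κ m p μ))) := by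
    have hcont : Continuous fun t : ℝ≥0 => ENNReal.ofReal (assocNormSq κ m p μ +
        t * ((3 + t) * S + 2 * (1 + t))) :=
      ENNReal.continuous_ofReal.comp (by fun_prop)
    simpa using (hcont.tendsto 0).mono_left nhdsWithin_le_nhds
  refine ge_of_tendsto hlim (eventually_nhdsWithin_of_forall fun t ht => ?_)
  obtain ⟨K, hK⟩ := exists_compactSub_minE_le hκ hpd ha hμ ht
  exact (iInf_le _ K).trans hK

end Zorii

open Zorii in
theorem statement1_general
    {X : Type} [TopologicalSpace X] [T2Space X]
    [MeasurableSpace X] [BorelSpace X]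
    (κ : X → X → ℝ≥0∞) (hker : IsKernel κ) (hpd : PositiveDefinite κ)
    (m p : ℕ) (A : Condenser X m p)
    (g : X → ℝ)
    (a : Fin (m + p) → ℝ) (ha : ∀ i, 0 < a i) :
    Filter.Tendsto (fun K : CompactSub A => cap κ K.1 a g) Filter.atTop
      (nhds (cap κ A a g)) := by
  have hmono : Monotone fun K : CompactSub A => cap κ K.1 a g := fun K L hKL =>
    ENNReal.inv_le_inv.2 (minE_le_of_prec hKL _ _)
  have hinf : ⨅ K : CompactSub A, minE κ K.1 (aVec a) g = minE κ A (aVec a) g :=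
    le_antisymm (iInf_minE_compactSub_le hker hpd A ha g)
      (le_iInf fun K => minE_le_of_prec K.2.2 _ _)
  have hsup : ⨆ K : CompactSub A, cap κ K.1 a g = cap κ A a g := by
    simp only [cap, ← ENNReal.inv_iInf, hinf]
  exact hsup ▸ tendsto_atTop_iSup hmono

open Zorii in
/-- Lemma 2: `cap(A,a,g) = lim_{K↑A} cap(K,a,g)` as `K` ranges over the
increasing family of all compact condensers `K ≺ A`. -/
theorem statement1
    {X : Type} [TopologicalSpace X] [T2Space X] [LocallyCompactSpace X]
    [MeasurableSpace X] [BorelSpace X]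
    (κ : X → X → ℝ≥0∞) (hker : IsKernel κ) (hpd : PositiveDefinite κ)
    (m p : ℕ) (hm : 0 < m) (A : Condenser X m p)
    (g : X → ℝ) (hgc : Continuous g) (hgpos : ∀ x, 0 < g x)
    (a : Fin (m + p) → ℝ) (ha : ∀ i, 0 < a i) :
    Filter.Tendsto (fun K : CompactSub A => cap κ K.1 a g) Filter.atTop
      (nhds (cap κ A a g)) :=
  statement1_general κ hker hpd m p A g a ha
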